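/- arXiv:2007.15323 — 6 statements merged into one kernel-verified Lean document; each statement's English description precedes it below -/
import Mathlib

section
/- For z = e^{2πi/N} an N-th root of unity and any integer J with 0 ≤ J ≤ N, the sum ∑_{k=1}^{N-1} z^{kJ} / ((1 - z^k)(1 - z^{-k})) equals (N² - 1)/12 - J(N - J)/2. -/
open Complex Finset

/-!
Write `f J` for the sum and `w = ζ ^ k`. Since `(1 - w) (1 - w⁻¹) = -(1 - w) ^ 2 / w`, the second
difference `f (J + 2) - 2 f (J + 1) + f J` equals `-∑ₖ (ζ ^ (J + 1)) ^ k = 1` for `J + 2 ≤ N`, so `f`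
is a quadratic polynomial in `J` on `[0, N]` with leading coefficient `1 / 2`. Periodicity
`f N = f 0` fixes its linear coefficient, and `∑_{J < N} f J = 0` (orthogonality of the characters
`J ↦ ζ ^ (k J)`) fixes `f 0 = (N ^ 2 - 1) / 12`.
-/

theorem eq_add_mul_add_choose_two_mul_of_second_diff {R : Type*} [CommRing R] {f : ℕ → R}
    {c : R} {n : ℕ} (hf : ∀ j, j + 2 ≤ n → f (j + 2) - 2 * f (j + 1) + f j = c) :
    ∀ j ≤ n, f j = f 0 + j * (f 1 - f 0) + j.choose 2 * c := by
  intro j hj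
  induction j using Nat.strong_induction_on with
  | _ j ih =>
    match j, hj with
    | 0, _ => simp
    | 1, _ => simp
    | j + 2, hj =>
      have hj1 := ih (j + 1) (by omega) (by omega)
      have hj0 := ih j (by omega) (by omega)
      have hc (i : ℕ) : (i + 1).choose 2 = i.choose 2 + i := by
        rw [Nat.choose_succ_succ', Nat.choose_one_right, add_comm]
      rw [hc, hc]
      rw [hc] at hj1
      push_cast at hj1 ⊢
      linear_combination hf j hj + 2 * hj1 - hj0

section Sums

variable {K : Type*} [Field K] [CharZero K]

theorem sum_range_natCast (n : ℕ) : ∑ i ∈ range n, (i : K) = n * (n - 1) / 2 := by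
  induction n with
  | zero => simp
  | succ n ih => rw [sum_range_succ, ih]; push_cast; ring

theorem sum_range_natCast_choose_two (n : ℕ) :
    ∑ i ∈ range n, (i.choose 2 : K) = n * (n - 1) * (n - 2) / 6 := by
  induction n with
  | zero => simp
  | succ n ih => rw [sum_range_succ, ih, Nat.cast_choose_two]; push_cast; ring

end Sums

section RootsOfUnity

variable {K : Type*} [Field K]

theorem geom_sum_eq_zero_of_pow_eq_one {w : K} {N : ℕ} (hw : w ^ N = 1) (hw1 : w ≠ 1) :
    ∑ i ∈ range N, w ^ i = 0 := by
  rw [geom_sum_eq hw1, hw, sub_self, zero_div]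

theorem sum_Ico_one_pow_eq_neg_one {w : K} {N : ℕ} (hN : N ≠ 0) (hw : w ^ N = 1) (hw1 : w ≠ 1) :
    ∑ i ∈ Ico 1 N, w ^ i = -1 := by
  have := geom_sum_eq_zero_of_pow_eq_one hw hw1
  rw [sum_range_eq_add_Ico _ (Nat.pos_of_ne_zero hN), pow_zero] at this
  linear_combination this

theorem second_diff_pow_div {w : K} (hw0 : w ≠ 0) (hw1 : w ≠ 1) (J : ℕ) :
    (w ^ (J + 2) - 2 * w ^ (J + 1) + w ^ J) / ((1 - w) * (1 - w⁻¹)) = -w ^ (J + 1) := by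
  have : 1 - w ≠ 0 := sub_ne_zero.mpr hw1.symm
  have : 1 - w⁻¹ ≠ 0 := sub_ne_zero.mpr (by simpa [eq_comm] using hw1)
  field_simp
  ring

noncomputable def haldaneSum (ζ : K) (N J : ℕ) : K :=
  ∑ k ∈ Ico 1 N, (ζ ^ k) ^ J / ((1 - ζ ^ k) * (1 - (ζ ^ k)⁻¹))

theorem haldaneSum_self {ζ : K} {N : ℕ} (h : ζ ^ N = 1) : haldaneSum ζ N N = haldaneSum ζ N 0 :=
  sum_congr rfl fun k _ => by rw [pow_right_comm, h, one_pow, pow_zero]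

namespace IsPrimitiveRoot

variable {ζ : K} {N : ℕ}

theorem haldaneSum_second_diff (hζ : IsPrimitiveRoot ζ N) {J : ℕ} (hJ : J + 2 ≤ N) :
    haldaneSum ζ N (J + 2) - 2 * haldaneSum ζ N (J + 1) + haldaneSum ζ N J = 1 := by
  have hterm : ∀ k ∈ Ico 1 N,
      (ζ ^ k) ^ (J + 2) / ((1 - ζ ^ k) * (1 - (ζ ^ k)⁻¹)) -
          2 * ((ζ ^ k) ^ (J + 1) / ((1 - ζ ^ k) * (1 - (ζ ^ k)⁻¹))) +
          (ζ ^ k) ^ J / ((1 - ζ ^ k) * (1 - (ζ ^ k)⁻¹)) = -(ζ ^ (J + 1)) ^ k := by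
    intro k hk
    rw [mem_Ico] at hk
    rw [pow_right_comm ζ (J + 1) k, ← second_diff_pow_div (pow_ne_zero _ (hζ.ne_zero (by omega)))
      (hζ.pow_ne_one_of_pos_of_lt (by omega) hk.2)]
    ring
  rw [haldaneSum, haldaneSum, haldaneSum, mul_sum, ← sum_sub_distrib, ← sum_add_distrib,
    sum_congr rfl hterm, sum_neg_distrib, sum_Ico_one_pow_eq_neg_one (by omega)
      (by rw [pow_right_comm, hζ.pow_eq_one, one_pow])
      (hζ.pow_ne_one_of_pos_of_lt (by omega) (by omega)), neg_neg]

theorem sum_range_haldaneSum (hζ : IsPrimitiveRoot ζ N) : ∑ J ∈ range N, haldaneSum ζ N J = 0 := by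
  simp only [haldaneSum]
  rw [sum_comm]
  refine sum_eq_zero fun k hk => ?_
  rw [mem_Ico] at hk
  rw [← sum_div, geom_sum_eq_zero_of_pow_eq_one (by rw [pow_right_comm, hζ.pow_eq_one, one_pow])
    (hζ.pow_ne_one_of_pos_of_lt (by omega) hk.2), zero_div]

theorem haldaneSum_eq [CharZero K] (hζ : IsPrimitiveRoot ζ N) (hN : N ≠ 0) {J : ℕ} (hJ : J ≤ N) :
    haldaneSum ζ N J = ((N : K) ^ 2 - 1) / 12 - J * (N - J) / 2 := by
  have hquad := eq_add_mul_add_choose_two_mul_of_second_diff fun _ => hζ.haldaneSum_second_diff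
  set f := haldaneSum ζ N
  have hN' : (N : K) ≠ 0 := Nat.cast_ne_zero.mpr hN
  have hslope : f 1 - f 0 = -((N : K) - 1) / 2 := by
    have h := hquad N le_rfl
    have hper : f N = f 0 := haldaneSum_self hζ.pow_eq_one
    rw [hper, Nat.cast_choose_two] at h
    apply mul_left_cancel₀ hN'
    linear_combination -h
  have hf0 : f 0 = ((N : K) ^ 2 - 1) / 12 := by
    have h := hζ.sum_range_haldaneSum
    rw [sum_congr rfl fun j hj => hquad j (mem_range.mp hj).le] at h
    simp only [sum_add_distrib, sum_const, card_range, nsmul_eq_mul, ← sum_mul,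
      sum_range_natCast, sum_range_natCast_choose_two] at h
    rw [hslope] at h
    apply mul_left_cancel₀ hN'
    linear_combination h
  rw [hquad J hJ, hslope, hf0, Nat.cast_choose_two]
  ring

end IsPrimitiveRoot
end RootsOfUnity

/-- Haldane summation formula: for `z = exp(2πi/N)` and `0 ≤ J ≤ N`,
`∑_{k=1}^{N-1} z^{kJ}/((1-z^k)(1-z^{-k})) = (N²-1)/12 - J(N-J)/2`. -/
theorem haldane_sum (N : ℕ) (hN : 2 ≤ N) (J : ℕ) (hJ : J ≤ N) :
    ∑ k ∈ Finset.Ico 1 N,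
      (Complex.exp (2 * Real.pi * Complex.I / N)) ^ (k * J) /
        ((1 - (Complex.exp (2 * Real.pi * Complex.I / N)) ^ k) *
          (1 - (Complex.exp (2 * Real.pi * Complex.I / N)) ^ (-(k : ℤ)))) =
      ((N : ℂ) ^ 2 - 1) / 12 - (J : ℂ) * ((N : ℂ) - (J : ℂ)) / 2 := by
  rw [← (isPrimitiveRoot_exp N (by omega)).haldaneSum_eq (by omega) hJ]
  simp only [haldaneSum, pow_mul, zpow_neg, zpow_natCast]
end

section
/- The eigenvalues of the linear operator |∇|_N on ℂ^N defined by (|∇|_N f)_k = (1/(2N)) ∑_{ℓ ≠ k} (f_k - f_ℓ)/sin²(π(k-ℓ)/N) are exactly μ_j = j(1 - j/N) for j = 0, 1, ..., N-1, with corresponding eigenvectors V^{(j)} = (1, z^j, z^{2j}, ..., z^{j(N-1)})/√N where z = e^{2πi/N}. -/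
/-!
Write `ζ = e^{2πi/N}` and `w = ζ^{ℓ-k}`. Then `4 sin²(π(k-ℓ)/N) = (1 - w)(1 - w⁻¹)`, so `|∇|_N` maps
the Fourier mode `k ↦ ζ^{jk}` to itself times `(2/N) ∑_{w^N = 1} (1 - w^j) / ((1 - w)(1 - w⁻¹))`.
Pairing `w` with `w⁻¹` turns the summand into the Fejér kernel
`|1 + w + ⋯ + w^{j-1}|²`, whose sum over the `N`-th roots of unity is `Nj` by orthogonality; the
excluded root `w = 1` contributes `j²`, which leaves the eigenvalue `j(N - j)/N`.

Conversely, `|∇|_N` is symmetric for the bilinear pairing `∑ₖ gₖ fₖ`, so an eigenvector `f` with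
eigenvalue `μ` satisfies `(μ - μ_j) ∑ₖ ζ^{jk} fₖ = 0` for every `j`; the Fourier modes form a
Vandermonde basis, so some of these pairings is nonzero and `μ = μ_j`.
-/

open Complex Finset
open scoped Real

section PowFin

variable {G : Type*} [GroupWithZero G] {ζ : G} {N : ℕ}

theorem pow_val_add_of_pow_eq_one (hζ : ζ ^ N = 1) (a b : Fin N) :
    ζ ^ ((a + b : Fin N) : ℕ) = ζ ^ (a : ℕ) * ζ ^ (b : ℕ) := by
  rw [Fin.val_add, ← pow_eq_pow_mod _ hζ, pow_add]

theorem pow_val_sub_of_pow_eq_one [NeZero N] (hζ : ζ ^ N = 1) (a b : Fin N) :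
    ζ ^ ((a - b : Fin N) : ℕ) = ζ ^ (a : ℕ) / ζ ^ (b : ℕ) := by
  have hζ0 : ζ ≠ 0 := by
    rintro rfl
    exact zero_ne_one ((zero_pow (M₀ := G) (NeZero.ne N)).symm.trans hζ)
  rw [eq_div_iff (pow_ne_zero _ hζ0), ← pow_val_add_of_pow_eq_one hζ, sub_add_cancel]

variable {M : Type*} [AddCommMonoid M] [NeZero N]

theorem sum_pow_val_div_pow_val (hζ : ζ ^ N = 1) (k : Fin N) (F : G → M) :
    ∑ ℓ : Fin N, F (ζ ^ (ℓ : ℕ) / ζ ^ (k : ℕ)) = ∑ m : Fin N, F (ζ ^ (m : ℕ)) :=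
  Fintype.sum_equiv (Equiv.subRight k) _ _ fun ℓ => by
    rw [Equiv.subRight_apply, pow_val_sub_of_pow_eq_one hζ]

theorem sum_inv_pow_val (hζ : ζ ^ N = 1) (F : G → M) :
    ∑ m : Fin N, F (ζ ^ (m : ℕ))⁻¹ = ∑ m : Fin N, F (ζ ^ (m : ℕ)) :=
  Fintype.sum_equiv (Equiv.neg _) _ _ fun m => by
    rw [Equiv.neg_apply, ← zero_sub, pow_val_sub_of_pow_eq_one hζ, Fin.val_zero, pow_zero,
      one_div]

end PowFin

theorem sin_sq_eq_mul_one_sub_exp (z : ℂ) :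
    sin z ^ 2 = (1 - exp (2 * z * I)) * (1 - exp (-(2 * z * I))) / 4 := by
  have h2 : exp (2 * z * I) = exp (z * I) ^ 2 := by rw [← exp_nat_mul]; ring_nf
  have hm : exp (-(2 * z * I)) = (exp (z * I) ^ 2)⁻¹ := by rw [exp_neg, h2]
  have h0 : exp (z * I) ≠ 0 := exp_ne_zero _
  rw [sin, h2, hm, neg_mul, exp_neg]
  field_simp
  linear_combination 4 * (exp (z * I) ^ 4 - 2 * exp (z * I) ^ 2 + 1) * I_sq

section RootsOfUnity

variable {K : Type*} [Field K]

theorem one_sub_pow_div_add_one_sub_inv_pow_div {w : K} (hw : w ≠ 0) (hw1 : w ≠ 1) (j : ℕ) :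
    (1 - w ^ j) / ((1 - w) * (1 - w⁻¹)) + (1 - w⁻¹ ^ j) / ((1 - w) * (1 - w⁻¹)) =
      (∑ s ∈ range j, w ^ s) * ∑ t ∈ range j, w⁻¹ ^ t := by
  have hD : (1 - w) * (1 - w⁻¹) ≠ 0 :=
    mul_ne_zero (sub_ne_zero.2 (Ne.symm hw1)) (sub_ne_zero.2 (by simpa [eq_comm] using hw1))
  have hwj : w ^ j * w⁻¹ ^ j = 1 := by rw [← mul_pow, mul_inv_cancel₀ hw, one_pow]
  rw [← add_div, div_eq_iff hD]
  linear_combination (-(1 - w⁻¹) * ∑ t ∈ range j, w⁻¹ ^ t) * mul_neg_geom_sum w j -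
    (1 - w ^ j) * mul_neg_geom_sum w⁻¹ j - hwj

variable {ζ : K} {N : ℕ}

theorem IsPrimitiveRoot.sum_pow_mul_inv_pow (hζ : IsPrimitiveRoot ζ N) {s t : ℕ} (hs : s < N)
    (ht : t < N) :
    ∑ m : Fin N, (ζ ^ (m : ℕ)) ^ s * (ζ ^ (m : ℕ))⁻¹ ^ t = if s = t then (N : K) else 0 := by
  have hζ0 : ζ ≠ 0 := hζ.ne_zero (by omega)
  set u := ζ ^ s / ζ ^ t
  have hu : ∀ m : ℕ, (ζ ^ m) ^ s * (ζ ^ m)⁻¹ ^ t = u ^ m := fun m => by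
    rw [div_pow, ← pow_mul, ← pow_mul, inv_pow, ← pow_mul, ← pow_mul, div_eq_mul_inv,
      mul_comm s, mul_comm t]
  simp only [hu, Fin.sum_univ_eq_sum_range (u ^ ·)]
  split_ifs with hst
  · simp [u, hst, hζ0]
  · have hu1 : u ≠ 1 := fun h =>
      hst (hζ.pow_inj hs ht ((div_eq_one_iff_eq (pow_ne_zero _ hζ0)).1 h))
    have huN : u ^ N = 1 := by
      rw [div_pow, ← pow_mul, ← pow_mul, mul_comm s, mul_comm t, pow_mul, pow_mul, hζ.pow_eq_one,
        one_pow, one_pow, div_one]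
    have := mul_neg_geom_sum u N
    rw [huN, sub_self] at this
    exact (mul_eq_zero.1 this).resolve_left (sub_ne_zero.2 (Ne.symm hu1))

theorem IsPrimitiveRoot.sum_geom_sum_mul_geom_sum_inv (hζ : IsPrimitiveRoot ζ N) {j : ℕ}
    (hj : j ≤ N) :
    ∑ m : Fin N, (∑ s ∈ range j, (ζ ^ (m : ℕ)) ^ s) * ∑ t ∈ range j, (ζ ^ (m : ℕ))⁻¹ ^ t =
      N * j := by
  have hjN : ∀ s ∈ range j, s < N := fun s hs => (mem_range.1 hs).trans_le hj
  simp_rw [sum_mul_sum]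
  rw [sum_comm]
  calc ∑ s ∈ range j, ∑ m : Fin N, ∑ t ∈ range j, (ζ ^ (m : ℕ)) ^ s * (ζ ^ (m : ℕ))⁻¹ ^ t
      = ∑ s ∈ range j, ∑ t ∈ range j, if s = t then (N : K) else 0 :=
        sum_congr rfl fun s hs => by
          rw [sum_comm]
          exact sum_congr rfl fun t ht => hζ.sum_pow_mul_inv_pow (hjN s hs) (hjN t ht)
    _ = N * j := by simp +contextual [sum_ite_eq, mul_comm]

theorem IsPrimitiveRoot.two_mul_sum_one_sub_pow_div [NeZero N] (hζ : IsPrimitiveRoot ζ N) {j : ℕ}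
    (hj : j ≤ N) :
    2 * ∑ m : Fin N, (1 - (ζ ^ (m : ℕ)) ^ j) / ((1 - ζ ^ (m : ℕ)) * (1 - (ζ ^ (m : ℕ))⁻¹)) =
      j * (N - j) := by
  have hpow_ne_one : ∀ m ∈ univ.erase (0 : Fin N), ζ ^ (m : ℕ) ≠ 1 := fun m hm h =>
    (mem_erase.1 hm).1 (Fin.ext (Nat.eq_zero_of_dvd_of_lt ((hζ.pow_eq_one_iff_dvd _).1 h) m.2))
  have hζ0 : ζ ≠ 0 := hζ.ne_zero (NeZero.ne N)
  calc 2 * ∑ m : Fin N, (1 - (ζ ^ (m : ℕ)) ^ j) / ((1 - ζ ^ (m : ℕ)) * (1 - (ζ ^ (m : ℕ))⁻¹))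
      = ∑ m : Fin N, ((1 - (ζ ^ (m : ℕ)) ^ j) / ((1 - ζ ^ (m : ℕ)) * (1 - (ζ ^ (m : ℕ))⁻¹)) +
          (1 - (ζ ^ (m : ℕ))⁻¹ ^ j) / ((1 - ζ ^ (m : ℕ)) * (1 - (ζ ^ (m : ℕ))⁻¹))) := by
        rw [sum_add_distrib, two_mul]
        congr 1
        refine (sum_inv_pow_val hζ.pow_eq_one
          fun w => (1 - w ^ j) / ((1 - w) * (1 - w⁻¹))).symm.trans ?_
        simp only [inv_inv, mul_comm]
    _ = ∑ m ∈ univ.erase (0 : Fin N), (∑ s ∈ range j, (ζ ^ (m : ℕ)) ^ s) *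
          ∑ t ∈ range j, (ζ ^ (m : ℕ))⁻¹ ^ t := by
        rw [← add_sum_erase _ _ (mem_univ 0)]
        simp only [Fin.val_zero, pow_zero, inv_one, one_pow, sub_self, zero_div, add_zero, zero_add]
        exact sum_congr rfl fun m hm => one_sub_pow_div_add_one_sub_inv_pow_div
          (pow_ne_zero _ hζ0) (hpow_ne_one m hm) j
    _ = j * (N - j) := by
        have htotal := hζ.sum_geom_sum_mul_geom_sum_inv hj
        rw [← add_sum_erase _ _ (mem_univ 0)] at htotal
        simp only [Fin.val_zero, pow_zero, inv_one, one_pow, sum_const, card_range, nsmul_eq_mul,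
          mul_one] at htotal
        linear_combination htotal

end RootsOfUnity

theorem sum_mul_sum_sub_div_comm {ι K : Type*} [Fintype ι] [DecidableEq ι] [Field K]
    {D : ι → ι → K} (hD : ∀ k ℓ, D k ℓ = D ℓ k) (f g : ι → K) :
    ∑ k, g k * ∑ ℓ ∈ univ.filter (· ≠ k), (f k - f ℓ) / D k ℓ =
      ∑ k, f k * ∑ ℓ ∈ univ.filter (· ≠ k), (g k - g ℓ) / D k ℓ := by
  have hdiag : ∀ (h : ι → K) k,
      ∑ ℓ ∈ univ.filter (· ≠ k), (h k - h ℓ) / D k ℓ = ∑ ℓ, (h k - h ℓ) / D k ℓ := fun h k => by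
    rw [filter_ne', sum_erase _ (by simp)]
  have hcross : ∑ k, ∑ ℓ, g k * f ℓ / D k ℓ = ∑ k, ∑ ℓ, f k * g ℓ / D k ℓ := by
    rw [sum_comm]
    simp only [hD, mul_comm]
  simp_rw [hdiag]
  simp only [mul_sum, mul_div_assoc', mul_sub, sub_div, sum_sub_distrib]
  rw [hcross]
  simp only [mul_comm]

theorem exists_eigenvalue_eq_of_dotProduct_comm {ι κ K : Type*} [Fintype ι] [Field K]
    {A : (ι → K) → ι → K} (hA : ∀ f g, g ⬝ᵥ A f = f ⬝ᵥ A g) {e : κ → ι → K} {c : κ → K}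
    (he : ∀ j, A (e j) = c j • e j) (he_complete : ∀ f, (∀ j, e j ⬝ᵥ f = 0) → f = 0) {μ : K}
    {f : ι → K} (hf0 : f ≠ 0) (hf : A f = μ • f) : ∃ j, μ = c j := by
  by_contra! hμ
  refine hf0 (he_complete f fun j => ?_)
  have h : (μ - c j) * (e j ⬝ᵥ f) = 0 :=
    calc (μ - c j) * (e j ⬝ᵥ f) = e j ⬝ᵥ A f - f ⬝ᵥ A (e j) := by
          rw [hf, he, dotProduct_smul, dotProduct_smul, dotProduct_comm f, smul_eq_mul,
            smul_eq_mul, sub_mul]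
      _ = 0 := sub_eq_zero.2 (hA f (e j))
  exact (mul_eq_zero.1 h).resolve_left (sub_ne_zero.2 (hμ j))

theorem IsPrimitiveRoot.eq_zero_of_forall_dotProduct_eq_zero {R : Type*} [CommRing R] [IsDomain R]
    {ζ : R} {N : ℕ} (hζ : IsPrimitiveRoot ζ N) {f : Fin N → R}
    (hf : ∀ j : Fin N, (fun k : Fin N => (ζ ^ (k : ℕ)) ^ (j : ℕ)) ⬝ᵥ f = 0) : f = 0 :=
  Matrix.eq_zero_of_vecMul_eq_zero
    (Matrix.det_vandermonde_ne_zero_iff.2 fun a b hab => Fin.ext (hζ.pow_inj a.2 b.2 hab))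
    (funext fun j => by simpa [Matrix.vecMul, dotProduct_comm] using hf j)

theorem ofReal_sin_sq_pi_mul_sub_div (N k ℓ : ℕ) :
    ((Real.sin (π * ((k : ℝ) - ℓ) / N) : ℂ)) ^ 2 =
      (1 - exp (2 * π * I / N) ^ ℓ / exp (2 * π * I / N) ^ k) *
        (1 - (exp (2 * π * I / N) ^ ℓ / exp (2 * π * I / N) ^ k)⁻¹) / 4 := by
  have h : exp (2 * ((π * ((k : ℝ) - ℓ) / N : ℝ) : ℂ) * I) =
      (exp (2 * π * I / N) ^ ℓ / exp (2 * π * I / N) ^ k)⁻¹ := by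
    rw [inv_div, ← exp_nat_mul, ← exp_nat_mul, ← exp_sub]
    congr 1
    push_cast
    ring
  rw [ofReal_sin, sin_sq_eq_mul_one_sub_exp, exp_neg, h, inv_inv, mul_comm]

theorem exp_two_pi_mul_I_mul_mul_div (N a b : ℕ) :
    exp (2 * π * I * a * b / N) = (exp (2 * π * I / N) ^ b) ^ a := by
  rw [← exp_nat_mul, ← exp_nat_mul]
  congr 1
  ring

noncomputable def nablaN (N : ℕ) (f : Fin N → ℂ) (k : Fin N) : ℂ :=
  (1 / (2 * (N : ℂ))) * ∑ ℓ ∈ univ.filter (fun ℓ : Fin N => ℓ ≠ k),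
    (f k - f ℓ) / ((Real.sin (π * (((k : ℕ) : ℝ) - ((ℓ : ℕ) : ℝ)) / N) : ℂ)) ^ 2

section NablaN

variable {N : ℕ}

theorem nablaN_smul (c : ℂ) (f : Fin N → ℂ) : nablaN N (c • f) = c • nablaN N f := by
  funext k
  simp only [nablaN, Pi.smul_apply, smul_eq_mul, ← mul_sub, mul_div_assoc, ← mul_sum]
  ring

theorem dotProduct_nablaN_comm (f g : Fin N → ℂ) : g ⬝ᵥ nablaN N f = f ⬝ᵥ nablaN N g := by
  simp only [dotProduct, nablaN, mul_left_comm _ (1 / (2 * (N : ℂ))), ← mul_sum]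
  congr 1
  refine sum_mul_sum_sub_div_comm (fun k ℓ => ?_) f g
  rw [← neg_sub, mul_neg, neg_div, Real.sin_neg, ofReal_neg, neg_sq]

theorem nablaN_pow [NeZero N] {j : ℕ} (hj : j ≤ N) :
    nablaN N (fun ℓ => (exp (2 * π * I / N) ^ (ℓ : ℕ)) ^ j) =
      ((j : ℂ) * (1 - j / N)) • fun k : Fin N => (exp (2 * π * I / N) ^ (k : ℕ)) ^ j := by
  set ζ := exp (2 * π * I / N) with hζdef
  have hζ : IsPrimitiveRoot ζ N := isPrimitiveRoot_exp N (NeZero.ne N)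
  have hζ0 : ζ ≠ 0 := exp_ne_zero _
  funext k
  have hterm : ∀ ℓ : Fin N,
      ((ζ ^ (k : ℕ)) ^ j - (ζ ^ (ℓ : ℕ)) ^ j) /
          ((Real.sin (π * (((k : ℕ) : ℝ) - ((ℓ : ℕ) : ℝ)) / N) : ℂ)) ^ 2 =
        4 * (ζ ^ (k : ℕ)) ^ j * ((1 - (ζ ^ (ℓ : ℕ) / ζ ^ (k : ℕ)) ^ j) /
          ((1 - ζ ^ (ℓ : ℕ) / ζ ^ (k : ℕ)) * (1 - (ζ ^ (ℓ : ℕ) / ζ ^ (k : ℕ))⁻¹))) := by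
    intro ℓ
    have hℓ : (ζ ^ (ℓ : ℕ)) ^ j = (ζ ^ (k : ℕ)) ^ j * (ζ ^ (ℓ : ℕ) / ζ ^ (k : ℕ)) ^ j := by
      rw [div_pow, mul_div_cancel₀ _ (pow_ne_zero _ (pow_ne_zero _ hζ0))]
    rw [ofReal_sin_sq_pi_mul_sub_div, ← hζdef, hℓ]
    generalize ζ ^ (ℓ : ℕ) / ζ ^ (k : ℕ) = w
    generalize (1 - w) * (1 - w⁻¹) = D
    ring
  have hsum := hζ.two_mul_sum_one_sub_pow_div hj
  simp only [nablaN, Pi.smul_apply, smul_eq_mul]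
  rw [sum_congr rfl fun ℓ _ => hterm ℓ, filter_ne', sum_erase _ (by simp [hζ0]), ← mul_sum,
    sum_pow_val_div_pow_val hζ.pow_eq_one k fun w => (1 - w ^ j) / ((1 - w) * (1 - w⁻¹))]
  generalize ∑ m : Fin N, (1 - (ζ ^ (m : ℕ)) ^ j) / ((1 - ζ ^ (m : ℕ)) * (1 - (ζ ^ (m : ℕ))⁻¹)) = S
    at hsum ⊢
  have hN : (N : ℂ) ≠ 0 := Nat.cast_ne_zero.2 (NeZero.ne N)
  rw [show S = j * (N - j) / 2 by linear_combination hsum / 2]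
  field_simp
  ring

end NablaN

theorem eigenvalues_nablaN_general (N : ℕ)
    (op : (Fin N → ℂ) → (Fin N → ℂ))
    (hop : ∀ f : Fin N → ℂ, ∀ k : Fin N,
      op f k = (1 / (2 * (N : ℂ))) *
        ∑ ℓ ∈ Finset.univ.filter (fun ℓ : Fin N => ℓ ≠ k),
          (f k - f ℓ) /
            ((Real.sin (Real.pi * (((k : ℕ) : ℝ) - ((ℓ : ℕ) : ℝ)) / N) : ℂ)) ^ 2) :
    (∀ j : Fin N,
      op (fun k : Fin N =>
          Complex.exp (2 * Real.pi * Complex.I * (j : ℕ) * (k : ℕ) / N) / (Real.sqrt N : ℂ)) =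
        fun k : Fin N =>
          ((((j : ℕ) : ℂ) * (1 - ((j : ℕ) : ℂ) / N))) *
            (Complex.exp (2 * Real.pi * Complex.I * (j : ℕ) * (k : ℕ) / N) / (Real.sqrt N : ℂ))) ∧
    (∀ μ : ℂ, (∃ f : Fin N → ℂ, f ≠ 0 ∧ op f = fun k => μ * f k) →
      ∃ j : Fin N, μ = (((j : ℕ) : ℂ) * (1 - ((j : ℕ) : ℂ) / N))) := by
  obtain rfl : op = nablaN N := funext fun f => funext (hop f)
  rcases N.eq_zero_or_pos with rfl | hN
  · exact ⟨fun j => j.elim0, fun μ ⟨f, hf0, _⟩ => absurd (Subsingleton.elim f 0) hf0⟩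
  have : NeZero N := .of_pos hN
  refine ⟨fun j => ?_, fun μ ⟨f, hf0, hf⟩ => ?_⟩
  · have hV : (fun k : Fin N => exp (2 * π * I * (j : ℕ) * (k : ℕ) / N) / (Real.sqrt N : ℂ)) =
        (Real.sqrt N : ℂ)⁻¹ • fun k : Fin N => (exp (2 * π * I / N) ^ (k : ℕ)) ^ (j : ℕ) := by
      ext k
      rw [Pi.smul_apply, smul_eq_mul, exp_two_pi_mul_I_mul_mul_div, div_eq_inv_mul]
    rw [hV, nablaN_smul, nablaN_pow j.2.le, smul_comm, ← hV]
    rfl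
  · exact exists_eigenvalue_eq_of_dotProduct_comm dotProduct_nablaN_comm
      (fun j : Fin N => nablaN_pow j.2.le)
      (fun _ => (isPrimitiveRoot_exp N (NeZero.ne N)).eq_zero_of_forall_dotProduct_eq_zero) hf0 hf

/-- The eigenvalues of the discrete operator `|∇|_N` on `ℂ^N` given by
`(|∇|_N f)_k = (1/(2N)) ∑_{ℓ ≠ k} (f_k - f_ℓ)/sin²(π(k-ℓ)/N)` are exactly
`μ_j = j(1 - j/N)` for `j = 0, …, N-1`, with eigenvectors
`V^{(j)}_k = z^{jk}/√N`, `z = e^{2πi/N}`. -/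
theorem eigenvalues_nablaN (N : ℕ) (hN : 2 ≤ N)
    (op : (Fin N → ℂ) → (Fin N → ℂ))
    (hop : ∀ f : Fin N → ℂ, ∀ k : Fin N,
      op f k = (1 / (2 * (N : ℂ))) *
        ∑ ℓ ∈ Finset.univ.filter (fun ℓ : Fin N => ℓ ≠ k),
          (f k - f ℓ) /
            ((Real.sin (Real.pi * (((k : ℕ) : ℝ) - ((ℓ : ℕ) : ℝ)) / N) : ℂ)) ^ 2) :
    (∀ j : Fin N,
      op (fun k : Fin N =>
          Complex.exp (2 * Real.pi * Complex.I * (j : ℕ) * (k : ℕ) / N) / (Real.sqrt N : ℂ)) =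
        fun k : Fin N =>
          ((((j : ℕ) : ℂ) * (1 - ((j : ℕ) : ℂ) / N))) *
            (Complex.exp (2 * Real.pi * Complex.I * (j : ℕ) * (k : ℕ) / N) / (Real.sqrt N : ℂ))) ∧
    (∀ μ : ℂ, (∃ f : Fin N → ℂ, f ≠ 0 ∧ op f = fun k => μ * f k) →
      ∃ j : Fin N, μ = (((j : ℕ) : ℂ) * (1 - ((j : ℕ) : ℂ) / N))) :=
  eigenvalues_nablaN_general N op hop
end

section
/- Let ε > 0 and let f ∈ H^{1/2+ε}(𝕊) with Fourier coefficients (f̂_k). For N = 2n+1 odd, define the aliasing operator I_N(f) = ∑_{k=-n}^n (∑_{j∈ℤ} f̂_{k+jN}) z^k. Then ‖I_N(f)‖_{H^{1/2+ε}} ≤ C(ε) ‖f‖_{H^{1/2+ε}} with a constant C(ε) independent of N. -/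
/-!
Write `⟨k⟩^σ = (1 + k²)^(σ/2)` with `σ = 1 + 2ε > 1` and `N = 2n + 1`. For `|k| ≤ n` the aliased
frequencies satisfy the Peetre-type bound `(1 + k²)(1 + j²) ≤ 2 (1 + (k + jN)²)`. Weighted
Cauchy–Schwarz over the class `k + Nℤ` gives
`⟨k⟩^σ |A_k|² ≤ ⟨k⟩^σ (∑ⱼ ⟨k + jN⟩^{-σ}) ∑ⱼ ⟨k + jN⟩^σ |a_{k+jN}|²`, and the bound turns the
middle factor into at most `2^{σ/2} ∑ⱼ ⟨j⟩^{-σ}`, finite because `σ > 1` and independent of `N`.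
The classes `k + Nℤ`, `|k| ≤ n`, are disjoint, so summing over `k` costs nothing more.
-/

open Finset

section CauchySchwarz

variable {ι : Type*} {r f g : ι → ℝ}

theorem Summable.of_sq_le_mul (hf : ∀ i, 0 ≤ f i) (hg : ∀ i, 0 ≤ g i)
    (hrfg : ∀ i, r i ^ 2 ≤ f i * g i) (hfs : Summable f) (hgs : Summable g) : Summable r :=
  .of_norm_bounded ((hfs.add hgs).div_const 2) fun i => by
    have := two_mul_le_add_of_sq_le_mul (hf i) (hg i) ((sq_abs (r i)).trans_le (hrfg i))
    rw [Real.norm_eq_abs]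
    linarith

theorem tsum_sq_le_tsum_mul_tsum_of_sq_le_mul (hf : ∀ i, 0 ≤ f i) (hg : ∀ i, 0 ≤ g i)
    (hrfg : ∀ i, r i ^ 2 ≤ f i * g i) (hfs : Summable f) (hgs : Summable g) :
    (∑' i, r i) ^ 2 ≤ (∑' i, f i) * ∑' i, g i :=
  le_of_tendsto' ((Summable.of_sq_le_mul hf hg hrfg hfs hgs).hasSum.pow 2) fun s =>
    (sum_sq_le_sum_mul_sum_of_sq_le_mul s (fun i _ => hf i) (fun i _ => hg i)
      fun i _ => hrfg i).trans <|
    mul_le_mul (hfs.sum_le_tsum s fun i _ => hf i) (hgs.sum_le_tsum s fun i _ => hg i)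
      (sum_nonneg fun i _ => hg i) (tsum_nonneg hf)

theorem norm_tsum_sq_le_tsum_inv_mul_tsum_mul {E : Type*} [SeminormedAddCommGroup E]
    {v : ι → ℝ} {b : ι → E} (hv : ∀ i, 0 < v i) (hvs : Summable fun i => (v i)⁻¹)
    (hb : Summable fun i => v i * ‖b i‖ ^ 2) :
    ‖∑' i, b i‖ ^ 2 ≤ (∑' i, (v i)⁻¹) * ∑' i, v i * ‖b i‖ ^ 2 := by
  have hvi : ∀ i, 0 ≤ (v i)⁻¹ := fun i => (inv_pos.2 (hv i)).le
  have hvb : ∀ i, 0 ≤ v i * ‖b i‖ ^ 2 := fun i => by have := (hv i).le; positivity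
  have hsq : ∀ i, ‖b i‖ ^ 2 ≤ (v i)⁻¹ * (v i * ‖b i‖ ^ 2) := fun i => by
    rw [inv_mul_cancel_left₀ (hv i).ne']
  calc ‖∑' i, b i‖ ^ 2 ≤ (∑' i, ‖b i‖) ^ 2 :=
        pow_le_pow_left₀ (norm_nonneg _)
          (norm_tsum_le_tsum_norm (.of_sq_le_mul hvi hvb hsq hvs hb)) 2
    _ ≤ _ := tsum_sq_le_tsum_mul_tsum_of_sq_le_mul hvi hvb hsq hvs hb

end CauchySchwarz

theorem Int.one_add_sq_mul_one_add_sq_le {n k : ℤ} (hk : |k| ≤ n) (j : ℤ) :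
    (1 + k ^ 2) * (1 + j ^ 2) ≤ 2 * (1 + (k + j * (2 * n + 1)) ^ 2) := by
  rcases eq_or_ne j 0 with rfl | hj
  · nlinarith
  have hn : 0 ≤ n := (abs_nonneg k).trans hk
  have hj1 : 1 ≤ |j| := Int.one_le_abs hj
  have hfar : |j| * (n + 1) ≤ |k + j * (2 * n + 1)| := by
    have := abs_add_le (k + j * (2 * n + 1)) (-k)
    rw [add_neg_cancel_comm, abs_neg, abs_mul, abs_of_pos (by linarith : 0 < 2 * n + 1)] at this
    nlinarith
  calc (1 + k ^ 2) * (1 + j ^ 2) ≤ (n + 1) ^ 2 * (2 * |j| ^ 2) := by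
        gcongr
        · nlinarith [sq_abs k, abs_nonneg k]
        · nlinarith [sq_abs j]
    _ = 2 * (|j| * (n + 1)) ^ 2 := by ring
    _ ≤ 2 * |k + j * (2 * n + 1)| ^ 2 := by gcongr
    _ ≤ 2 * (1 + (k + j * (2 * n + 1)) ^ 2) := by rw [sq_abs]; linarith

noncomputable def sobolevWeight (σ : ℝ) (k : ℤ) : ℝ := (1 + (k : ℝ) ^ 2) ^ (σ / 2)

noncomputable def aliasingConstant (σ : ℝ) : ℝ := 2 ^ (σ / 2) * ∑' j : ℤ, (sobolevWeight σ j)⁻¹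

theorem sobolevWeight_pos (σ : ℝ) (k : ℤ) : 0 < sobolevWeight σ k := by
  unfold sobolevWeight; positivity

section Weight

variable {σ : ℝ}

theorem abs_rpow_le_sobolevWeight (hσ : 0 ≤ σ) (k : ℤ) : |(k : ℝ)| ^ σ ≤ sobolevWeight σ k := by
  have hsq : |(k : ℝ)| ^ σ = ((k : ℝ) ^ 2) ^ (σ / 2) := by
    rw [← sq_abs, ← Real.rpow_two, ← Real.rpow_mul (abs_nonneg _)]
    ring_nf
  rw [hsq, sobolevWeight]
  gcongr
  linarith

theorem summable_sobolevWeight_inv (hσ : 1 < σ) :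
    Summable fun k : ℤ => (sobolevWeight σ k)⁻¹ := by
  refine .of_norm_bounded_eventually (Real.summable_abs_int_rpow hσ) ?_
  filter_upwards [Filter.eventually_cofinite_ne 0] with k hk
  rw [Real.norm_of_nonneg (inv_pos.2 (sobolevWeight_pos σ k)).le, Real.rpow_neg (abs_nonneg _)]
  exact inv_anti₀ (Real.rpow_pos_of_pos (abs_pos.2 (Int.cast_ne_zero.2 hk)) _)
    (abs_rpow_le_sobolevWeight (by linarith) k)

theorem aliasingConstant_pos (hσ : 1 < σ) : 0 < aliasingConstant σ :=
  mul_pos (by positivity) <| (summable_sobolevWeight_inv hσ).tsum_pos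
    (fun k => (inv_pos.2 (sobolevWeight_pos σ k)).le) 0 (inv_pos.2 (sobolevWeight_pos σ 0))

theorem sobolevWeight_mul_le (hσ : 0 ≤ σ) {n k : ℤ} (hk : |k| ≤ n) (j : ℤ) :
    sobolevWeight σ k * sobolevWeight σ j ≤
      2 ^ (σ / 2) * sobolevWeight σ (k + j * (2 * n + 1)) := by
  unfold sobolevWeight
  rw [← Real.mul_rpow (by positivity) (by positivity),
    ← Real.mul_rpow (by positivity) (by positivity)]
  exact Real.rpow_le_rpow (by positivity) (by exact_mod_cast Int.one_add_sq_mul_one_add_sq_le hk j)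
    (by linarith)

end Weight

theorem sum_tsum_comp_add_mul_le_tsum {g : ℤ → ℝ} (hg : ∀ m, 0 ≤ g m) (hgs : Summable g)
    {N : ℤ} (hN : N ≠ 0) {s : Finset ℤ} (hs : ∀ k ∈ s, ∀ k' ∈ s, N ∣ k - k' → k = k') :
    ∑ k ∈ s, ∑' j : ℤ, g (k + j * N) ≤ ∑' m, g m := by
  have hinj : Function.Injective fun p : s × ℤ => (p.1 : ℤ) + p.2 * N := by
    rintro ⟨⟨k, hk⟩, j⟩ ⟨⟨k', hk'⟩, j'⟩ h
    obtain rfl : k = k' := hs k hk k' hk' ⟨j' - j, by simp only at h; linarith⟩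
    obtain rfl : j = j' := mul_right_cancel₀ hN (by simpa using h)
    rfl
  have hprod : Summable fun p : s × ℤ => g (p.1 + p.2 * N) := hgs.comp_injective hinj
  calc ∑ k ∈ s, ∑' j : ℤ, g (k + j * N) = ∑' p : s × ℤ, g (p.1 + p.2 * N) := by
        rw [hprod.tsum_prod' fun k => hgs.comp_injective
          ((add_right_injective (k : ℤ)).comp (mul_left_injective₀ hN)), tsum_fintype,
          sum_coe_sort s fun k => ∑' j : ℤ, g (k + j * N)]
    _ ≤ ∑' m, g m := hprod.tsum_le_tsum_of_inj _ hinj (fun m _ => hg m) (fun p => le_rfl) hgs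

section Aliasing

variable {E : Type*} [SeminormedAddCommGroup E] {σ : ℝ}

theorem sobolevWeight_mul_norm_tsum_sq_le (hσ : 1 < σ) {n k : ℤ} (hk : |k| ≤ n) {a : ℤ → E}
    (ha : Summable fun j : ℤ =>
      sobolevWeight σ (k + j * (2 * n + 1)) * ‖a (k + j * (2 * n + 1))‖ ^ 2) :
    sobolevWeight σ k * ‖∑' j : ℤ, a (k + j * (2 * n + 1))‖ ^ 2 ≤
      aliasingConstant σ *
        ∑' j : ℤ, sobolevWeight σ (k + j * (2 * n + 1)) * ‖a (k + j * (2 * n + 1))‖ ^ 2 := by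
  set v : ℤ → ℝ := fun j => sobolevWeight σ (k + j * (2 * n + 1))
  have hv : ∀ j, 0 < v j := fun j => sobolevWeight_pos σ _
  have hratio : ∀ j, sobolevWeight σ k * (v j)⁻¹ ≤ 2 ^ (σ / 2) * (sobolevWeight σ j)⁻¹ := by
    intro j
    rw [mul_inv_le_iff₀ (hv j), mul_right_comm, le_mul_inv_iff₀ (sobolevWeight_pos σ j)]
    exact sobolevWeight_mul_le (by linarith) hk j
  have hsum : Summable fun j => sobolevWeight σ k * (v j)⁻¹ :=
    .of_nonneg_of_le (fun j => by have := hv j; have := sobolevWeight_pos σ k; positivity) hratio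
      ((summable_sobolevWeight_inv hσ).mul_left _)
  have hvs : Summable fun j => (v j)⁻¹ :=
    (summable_mul_left_iff (sobolevWeight_pos σ k).ne').1 hsum
  calc sobolevWeight σ k * ‖∑' j : ℤ, a (k + j * (2 * n + 1))‖ ^ 2
      ≤ sobolevWeight σ k * ((∑' j, (v j)⁻¹) * ∑' j, v j * ‖a (k + j * (2 * n + 1))‖ ^ 2) := by
        gcongr
        · exact (sobolevWeight_pos σ k).le
        · exact norm_tsum_sq_le_tsum_inv_mul_tsum_mul hv hvs ha
    _ = (∑' j, sobolevWeight σ k * (v j)⁻¹) * ∑' j, v j * ‖a (k + j * (2 * n + 1))‖ ^ 2 := by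
        rw [tsum_mul_left, mul_assoc]
    _ ≤ aliasingConstant σ * ∑' j, v j * ‖a (k + j * (2 * n + 1))‖ ^ 2 := by
        refine mul_le_mul_of_nonneg_right ?_ (tsum_nonneg fun j => by have := hv j; positivity)
        exact (hsum.tsum_le_tsum hratio ((summable_sobolevWeight_inv hσ).mul_left _)).trans_eq
          tsum_mul_left

theorem sum_sobolevWeight_mul_norm_tsum_sq_le (hσ : 1 < σ) (n : ℕ) {a : ℤ → E}
    (ha : Summable fun k => sobolevWeight σ k * ‖a k‖ ^ 2) :
    ∑ k ∈ Icc (-(n : ℤ)) n, sobolevWeight σ k * ‖∑' j : ℤ, a (k + j * (2 * n + 1))‖ ^ 2 ≤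
      aliasingConstant σ * ∑' k, sobolevWeight σ k * ‖a k‖ ^ 2 := by
  have hN : (2 * n + 1 : ℤ) ≠ 0 := by omega
  calc ∑ k ∈ Icc (-(n : ℤ)) n, sobolevWeight σ k * ‖∑' j : ℤ, a (k + j * (2 * n + 1))‖ ^ 2
      ≤ ∑ k ∈ Icc (-(n : ℤ)) n, aliasingConstant σ *
          ∑' j : ℤ, sobolevWeight σ (k + j * (2 * n + 1)) * ‖a (k + j * (2 * n + 1))‖ ^ 2 :=
        sum_le_sum fun k hk => sobolevWeight_mul_norm_tsum_sq_le hσ (abs_le.2 (mem_Icc.1 hk))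
          (ha.comp_injective ((add_right_injective k).comp (mul_left_injective₀ hN)))
    _ = aliasingConstant σ * ∑ k ∈ Icc (-(n : ℤ)) n,
          ∑' j : ℤ, sobolevWeight σ (k + j * (2 * n + 1)) * ‖a (k + j * (2 * n + 1))‖ ^ 2 :=
        (mul_sum _ _ _).symm
    _ ≤ aliasingConstant σ * ∑' k, sobolevWeight σ k * ‖a k‖ ^ 2 := by
        gcongr
        · exact (aliasingConstant_pos hσ).le
        · refine sum_tsum_comp_add_mul_le_tsum (fun m => ?_) ha hN fun k hk k' hk' hdvd => ?_
          · have := sobolevWeight_pos σ m; positivity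
          · rw [mem_Icc] at hk hk'
            exact sub_eq_zero.1 (Int.eq_zero_of_abs_lt_dvd hdvd (abs_lt.2 ⟨by omega, by omega⟩))

end Aliasing

/-- Uniform boundedness of the aliasing operator `I_N` on `H^{1/2+ε}(𝕊)`:
in terms of Fourier coefficients `a : ℤ → ℂ` with `∑ ⟨k⟩^{1+2ε}|a_k|² < ∞`,
the folded coefficients `A_k = ∑_{j∈ℤ} a_{k+jN}` (for `|k| ≤ n`, `N = 2n+1`)
satisfy `∑_{|k|≤n} ⟨k⟩^{1+2ε}|A_k|² ≤ C(ε) ∑_k ⟨k⟩^{1+2ε}|a_k|²`, with `C(ε)`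
independent of `N`. -/
theorem aliasing_bounded (ε : ℝ) (hε : 0 < ε) :
    ∃ C : ℝ, 0 < C ∧ ∀ (n N : ℕ), N = 2 * n + 1 →
      ∀ a : ℤ → ℂ,
        Summable (fun k : ℤ => (1 + (k : ℝ) ^ 2) ^ ((1 + 2 * ε) / 2) * (‖a k‖) ^ 2) →
        ∑ k ∈ Finset.Icc (-(n : ℤ)) (n : ℤ),
            (1 + (k : ℝ) ^ 2) ^ ((1 + 2 * ε) / 2) *
              (‖∑' j : ℤ, a (k + j * N)‖) ^ 2 ≤
          C * ∑' k : ℤ, (1 + (k : ℝ) ^ 2) ^ ((1 + 2 * ε) / 2) * (‖a k‖) ^ 2 := by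
  have hσ : 1 < 1 + 2 * ε := by linarith
  refine ⟨aliasingConstant (1 + 2 * ε), aliasingConstant_pos hσ, ?_⟩
  rintro n N rfl a ha
  push_cast
  exact sum_sobolevWeight_mul_norm_tsum_sq_le hσ n ha
end

section
/- For the discrete eigenvalues μ_j = |j|(1 - |j|/N) of |∇|_N (extended by μ_j = |j|/2 for |j| > n, N = 2n+1), the square-root differences satisfy the uniform bound |μ_ℓ^{1/2} - μ_j^{1/2}| ≤ C |ℓ - j|^{1/2} for all ℓ, j ∈ ℤ, with a constant C independent of N. -/
lemma sqrt_sub_le_sqrt_abs_sub (a b : ℝ) (hb : 0 ≤ b) (hab : b ≤ a) :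
    Real.sqrt a - Real.sqrt b ≤ Real.sqrt (a - b) := by
  have h1 : Real.sqrt a ≤ Real.sqrt b + Real.sqrt (a - b) := by
    have h2 : a ≤ (Real.sqrt b + Real.sqrt (a - b)) ^ 2 := by
      have hsb := Real.sq_sqrt hb
      have hsd := Real.sq_sqrt (by linarith : (0:ℝ) ≤ a - b)
      have := mul_nonneg (Real.sqrt_nonneg b) (Real.sqrt_nonneg (a - b))
      nlinarith
    calc Real.sqrt a ≤ Real.sqrt ((Real.sqrt b + Real.sqrt (a - b)) ^ 2) :=
          Real.sqrt_le_sqrt h2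
      _ = Real.sqrt b + Real.sqrt (a - b) := by
          rw [Real.sqrt_sq (by positivity)]
  linarith

lemma abs_sqrt_sub_sqrt_le (a b : ℝ) (ha : 0 ≤ a) (hb : 0 ≤ b) :
    |Real.sqrt a - Real.sqrt b| ≤ Real.sqrt |a - b| := by
  rcases le_total b a with h | h
  · rw [abs_of_nonneg (sub_nonneg.2 (Real.sqrt_le_sqrt h)), abs_of_nonneg (sub_nonneg.2 h)]
    exact sqrt_sub_le_sqrt_abs_sub a b hb h
  · rw [abs_of_nonpos (sub_nonpos.2 (Real.sqrt_le_sqrt h)), abs_of_nonpos (sub_nonpos.2 h),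
      neg_sub, neg_sub]
    exact sqrt_sub_le_sqrt_abs_sub b a ha h

/-- Uniform Hölder-1/2 bound for square roots of the discrete eigenvalues
`μ_j = |j|(1-|j|/N)` for `|j| ≤ n`, extended by `μ_j = |j|/2` for `|j| > n`
(`N = 2n+1`): `|√μ_ℓ - √μ_j| ≤ C |ℓ-j|^{1/2}` with `C` independent of `N`. -/
theorem sqrt_eigenvalue_holder :
    ∃ C : ℝ, 0 < C ∧ ∀ (n N : ℕ), N = 2 * n + 1 →
      ∀ ℓ j : ℤ,
        |Real.sqrt (if |ℓ| ≤ (n : ℤ) then |(ℓ : ℝ)| * (1 - |(ℓ : ℝ)| / N) else |(ℓ : ℝ)| / 2)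
          - Real.sqrt (if |j| ≤ (n : ℤ) then |(j : ℝ)| * (1 - |(j : ℝ)| / N) else |(j : ℝ)| / 2)|
        ≤ C * Real.sqrt |(ℓ : ℝ) - (j : ℝ)| := by
  refine ⟨1, one_pos, ?_⟩
  intro n N hN ℓ j
  rw [one_mul]
  subst hN
  set a : ℝ := |(ℓ : ℝ)| with ha
  set b : ℝ := |(j : ℝ)| with hb
  have ha0 : 0 ≤ a := abs_nonneg _
  have hb0 : 0 ≤ b := abs_nonneg _
  have hNpos : (0:ℝ) < ((2 * n + 1 : ℕ) : ℝ) := by positivity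
  have hNval : ((2 * n + 1 : ℕ) : ℝ) = 2 * (n : ℝ) + 1 := by push_cast; ring
  have habs : |a - b| ≤ |(ℓ : ℝ) - (j : ℝ)| := abs_abs_sub_abs_le_abs_sub _ _
  -- the eigenvalues
  set μℓ : ℝ := if |ℓ| ≤ (n : ℤ) then a * (1 - a / ((2 * n + 1 : ℕ) : ℝ)) else a / 2 with hμℓ
  set μj : ℝ := if |j| ≤ (n : ℤ) then b * (1 - b / ((2 * n + 1 : ℕ) : ℝ)) else b / 2 with hμj
  have key : ∀ (x : ℤ) (c : ℝ), c = |(x : ℝ)| → ((|x| ≤ (n:ℤ)) → c ≤ (n:ℝ)) ∧ (¬(|x| ≤ (n:ℤ)) → (n:ℝ) + 1 ≤ c) := by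
    intro x c hc
    constructor
    · intro h
      rw [hc, ← Int.cast_abs]
      exact_mod_cast h
    · intro h
      rw [hc, ← Int.cast_abs]
      have : (n:ℤ) + 1 ≤ |x| := by omega
      exact_mod_cast this
  have hμℓ0 : 0 ≤ μℓ := by
    rw [hμℓ]; split_ifs with h
    · have := (key ℓ a ha).1 h
      have : a / ((2 * n + 1 : ℕ) : ℝ) ≤ 1 := by
        rw [div_le_one hNpos, hNval]; linarith
      nlinarith
    · positivity
  have hμj0 : 0 ≤ μj := by
    rw [hμj]; split_ifs with h
    · have := (key j b hb).1 h
      have : b / ((2 * n + 1 : ℕ) : ℝ) ≤ 1 := by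
        rw [div_le_one hNpos, hNval]; linarith
      nlinarith
    · positivity
  -- Lipschitz bound
  have hlip : |μℓ - μj| ≤ |a - b| := by
    rw [hμℓ, hμj]
    set Nr : ℝ := ((2 * n + 1 : ℕ) : ℝ) with hNr
    have hmix : ∀ x y : ℝ, 0 ≤ x → x ≤ (n:ℝ) → (n:ℝ) + 1 ≤ y →
        |x * (1 - x / Nr) - y / 2| ≤ |x - y| := by
      intro x y hx hxn hy
      have hxy : x ≤ y := by linarith
      have h1 : 0 ≤ ((n:ℝ) - x) * ((n:ℝ) + 1 - x) := by nlinarith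
      have hlow : x * (1 - x / Nr) ≤ y / 2 := by
        have h4 : x * (1 - x / Nr) = (x * Nr - x * x) / Nr := by
          field_simp
        rw [h4, div_le_iff₀ hNpos, hNval]
        nlinarith
      have hup : y / 2 - x * (1 - x / Nr) ≤ y - x := by
        have h3 : x * (x / Nr) ≤ y / 2 := by
          rw [mul_div_assoc', div_le_iff₀ hNpos, hNval]
          nlinarith
        have hexp : x * (1 - x / Nr) = x - x * (x / Nr) := by ring
        linarith
      rw [abs_of_nonpos (by linarith), abs_of_nonpos (by linarith)]
      linarith
    split_ifs with h1 h2 h2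
    · -- both ≤ n
      have hxa := (key ℓ a ha).1 h1
      have hxb := (key j b hb).1 h2
      have hsum : a + b ≤ Nr := by rw [hNval]; linarith
      have : a * (1 - a / Nr) - b * (1 - b / Nr) = (a - b) * (1 - (a + b) / Nr) := by
        field_simp; ring
      rw [this, abs_mul]
      have h01 : |1 - (a + b) / Nr| ≤ 1 := by
        rw [abs_le]
        constructor
        · have : (a + b) / Nr ≤ 1 := by rw [div_le_one hNpos]; exact hsum
          linarith
        · have : 0 ≤ (a + b) / Nr := by positivity
          linarith
      calc |a - b| * |1 - (a + b) / Nr| ≤ |a - b| * 1 :=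
            mul_le_mul_of_nonneg_left h01 (abs_nonneg _)
        _ = |a - b| := mul_one _
    · -- ℓ small, j big
      have hxa := (key ℓ a ha).1 h1
      have hyb := (key j b hb).2 h2
      exact hmix a b ha0 hxa hyb
    · -- ℓ big, j small
      have hxb := (key j b hb).1 h2
      have hya := (key ℓ a ha).2 h1
      rw [abs_sub_comm, abs_sub_comm a b]
      exact hmix b a hb0 hxb hya
    · -- both big
      rw [div_sub_div_same, abs_div]
      have : |(2:ℝ)| = 2 := by norm_num
      rw [this]
      linarith [abs_nonneg (a - b)]
  calc |Real.sqrt μℓ - Real.sqrt μj| ≤ Real.sqrt |μℓ - μj| :=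
        abs_sqrt_sub_sqrt_le _ _ hμℓ0 hμj0
    _ ≤ Real.sqrt |(ℓ : ℝ) - (j : ℝ)| := Real.sqrt_le_sqrt (le_trans hlip habs)
end

section
/- Comparison of trigonometric and piecewise-constant interpolation: for a lattice function S : {z_0,...,z_{N-1}} → ℂ with N = 2n+1 and Fourier interpolation coefficients Ŝ(k) (|k| ≤ n), the L² distance between the trigonometric interpolation S̃ and the piecewise constant interpolation Σ (equal to S(z_j) on the arc of angular width 2π/N centered at z_j) is given exactly by ‖S̃ - Σ‖²_{L²(𝕊)} = 2 ∑_{k=-n}^n |Ŝ(k)|² (1 - sinc(kπ/N)). -/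
/-!
Write `θⱼ = 2πj/N`, `ζ = e^{2πi/N}` and `S̃(θ) = ∑ₖ cₖ e^{ikθ}` (`trigPoly`). Discrete Fourier
inversion gives `S(zⱼ) = S̃(θⱼ)`, so on the `j`-th arc, at offset `t`, the error is
`S̃(θⱼ + t) - S̃(θⱼ) = ∑ₖ cₖ (e^{ikt} - 1) ζ^{jk}`. Since `k` runs over `N` consecutive integers,
the discrete Parseval identity turns the sum over `j` of its squared modulus into
`N ∑ₖ |cₖ|² |e^{ikt} - 1|²`, and `∫_{-π/N}^{π/N} |e^{ikt} - 1|² dt = (4π/N) (1 - sinc (kπ/N))`.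
-/

open Complex Finset
open ComplexConjugate

noncomputable def sinc (x : ℝ) : ℝ := if x = 0 then 1 else Real.sin x / x

theorem sum_zpow_Ico_eq_zpow_mul_geom_sum {𝕜 : Type*} [Field 𝕜] {ω : 𝕜} (hω : ω ≠ 0)
    (a : ℤ) (N : ℕ) : ∑ k ∈ Ico a (a + N), ω ^ k = ω ^ a * ∑ i ∈ range N, ω ^ i := by
  rw [mul_sum]
  refine sum_nbij' (fun k => (k - a).toNat) (fun i => a + i) ?_ ?_ ?_ ?_ ?_ <;>
    intro x hx <;> simp only [mem_Ico, mem_range] at hx ⊢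
  · omega
  · omega
  · omega
  · omega
  · rw [← zpow_natCast, ← zpow_add₀ hω]
    congr 1
    omega

theorem Int.eq_of_dvd_sub_of_mem_Ico {a x y : ℤ} {N : ℕ} (hx : x ∈ Ico a (a + N))
    (hy : y ∈ Ico a (a + N)) (h : (N : ℤ) ∣ x - y) : x = y := by
  rw [mem_Ico] at hx hy
  have := Int.eq_zero_of_abs_lt_dvd h (by rw [abs_lt]; omega)
  omega

namespace IsPrimitiveRoot

section Field

variable {𝕜 : Type*} [Field 𝕜] {ζ : 𝕜} {N : ℕ}

theorem geom_sum_zpow (hζ : IsPrimitiveRoot ζ N) (m : ℤ) :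
    ∑ i ∈ range N, (ζ ^ m) ^ i = if (N : ℤ) ∣ m then (N : 𝕜) else 0 := by
  split_ifs with h
  · simp [(hζ.zpow_eq_one_iff_dvd m).2 h]
  · rw [geom_sum_eq (mt (hζ.zpow_eq_one_iff_dvd m).1 h), ← zpow_natCast, ← zpow_mul, mul_comm,
      zpow_mul, zpow_natCast, hζ.pow_eq_one, one_zpow, sub_self, zero_div]

theorem sum_fin_zpow_mul (hζ : IsPrimitiveRoot ζ N) (m : ℤ) :
    ∑ j : Fin N, ζ ^ ((j : ℕ) * m) = if (N : ℤ) ∣ m then (N : 𝕜) else 0 := by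
  rw [Fin.sum_univ_eq_sum_range (fun j : ℕ => ζ ^ ((j : ℤ) * m))]
  simp only [mul_comm _ m, zpow_mul, zpow_natCast, hζ.geom_sum_zpow]

theorem sum_Ico_zpow_mul (hζ : IsPrimitiveRoot ζ N) (a m : ℤ) :
    ∑ k ∈ Ico a (a + N), ζ ^ (m * k) = if (N : ℤ) ∣ m then (N : 𝕜) else 0 := by
  rcases N.eq_zero_or_pos with rfl | hN
  · simp
  simp only [zpow_mul]
  rw [sum_zpow_Ico_eq_zpow_mul_geom_sum (zpow_ne_zero _ (hζ.ne_zero hN.ne')), hζ.geom_sum_zpow]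
  split_ifs with h
  · rw [(hζ.zpow_eq_one_iff_dvd m).2 h, one_zpow, one_mul]
  · rw [mul_zero]

theorem sum_Ico_dft_mul_zpow (hζ : IsPrimitiveRoot ζ N) (a : ℤ) (S : Fin N → 𝕜) (j : Fin N) :
    ∑ k ∈ Ico a (a + N),
      ((N : 𝕜)⁻¹ * ∑ i : Fin N, S i * ζ ^ (-((i : ℕ) * k))) * ζ ^ ((j : ℕ) * k) = S j := by
  have : NeZero N := ⟨j.pos.ne'⟩
  have := hζ.neZero'
  have hval (i : Fin N) : ((i : ℕ) : ℤ) ∈ Ico (0 : ℤ) (0 + N) := by simp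
  calc ∑ k ∈ Ico a (a + N),
        ((N : 𝕜)⁻¹ * ∑ i : Fin N, S i * ζ ^ (-((i : ℕ) * k))) * ζ ^ ((j : ℕ) * k)
      = (N : 𝕜)⁻¹ * ∑ i : Fin N, S i * ∑ k ∈ Ico a (a + N), ζ ^ (((j : ℕ) - (i : ℕ)) * k) := by
        simp only [mul_assoc, ← mul_sum, sum_mul]
        rw [sum_comm]
        refine congrArg _ (sum_congr rfl fun i _ => ?_)
        rw [mul_sum]
        refine sum_congr rfl fun k _ => ?_
        rw [sub_mul, sub_eq_neg_add, zpow_add₀ (hζ.ne_zero (NeZero.ne N))]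
    _ = (N : 𝕜)⁻¹ * (S j * N) := by
        rw [sum_eq_single j (fun i _ hij => ?_) (fun h => absurd (mem_univ j) h),
          hζ.sum_Ico_zpow_mul, sub_self, if_pos (dvd_zero _)]
        rw [hζ.sum_Ico_zpow_mul, if_neg fun h => hij (Fin.ext ?_), mul_zero]
        exact_mod_cast (Int.eq_of_dvd_sub_of_mem_Ico (hval j) (hval i) h).symm
    _ = S j := by rw [mul_comm (S j), inv_mul_cancel_left₀ (NeZero.ne _)]

end Field

theorem sum_norm_sum_Ico_mul_zpow_sq {ζ : ℂ} {N : ℕ} (hζ : IsPrimitiveRoot ζ N) (a : ℤ)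
    (d : ℤ → ℂ) :
    ∑ j : Fin N, ‖∑ k ∈ Ico a (a + N), d k * ζ ^ ((j : ℕ) * k)‖ ^ 2 =
      N * ∑ k ∈ Ico a (a + N), ‖d k‖ ^ 2 := by
  rcases N.eq_zero_or_pos with rfl | hN
  · simp
  have hconj (x : ℤ) : conj (ζ ^ x) = ζ ^ (-x) := by
    rw [map_zpow₀, ← inv_eq_conj (hζ.norm'_eq_one hN.ne'), inv_zpow']
  apply ofReal_injective
  push_cast
  simp only [← mul_conj', map_sum, map_mul, hconj, sum_mul_sum]
  calc ∑ j : Fin N, ∑ k ∈ Ico a (a + N), ∑ l ∈ Ico a (a + N),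
        d k * ζ ^ ((j : ℕ) * k) * (conj (d l) * ζ ^ (-((j : ℕ) * l)))
      = ∑ k ∈ Ico a (a + N), ∑ l ∈ Ico a (a + N),
          d k * conj (d l) * ∑ j : Fin N, ζ ^ ((j : ℕ) * (k - l)) := by
        rw [sum_comm]
        refine sum_congr rfl fun k _ => ?_
        rw [sum_comm]
        refine sum_congr rfl fun l _ => ?_
        rw [mul_sum]
        refine sum_congr rfl fun j _ => ?_
        rw [mul_sub, sub_eq_add_neg, zpow_add₀ (hζ.ne_zero hN.ne')]
        ring
    _ = ∑ k ∈ Ico a (a + N), d k * conj (d k) * N := by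
        refine sum_congr rfl fun k hk => ?_
        rw [sum_eq_single k (fun l hl hlk => ?_) (fun hk' => absurd hk hk'), sub_self,
          hζ.sum_fin_zpow_mul, if_pos (dvd_zero _)]
        rw [hζ.sum_fin_zpow_mul,
          if_neg fun h => hlk (Int.eq_of_dvd_sub_of_mem_Ico hk hl h).symm, mul_zero]
    _ = N * ∑ k ∈ Ico a (a + N), d k * conj (d k) := by
        rw [mul_sum]
        exact sum_congr rfl fun k _ => mul_comm _ _

end IsPrimitiveRoot

theorem norm_exp_I_mul_ofReal_sub_one_sq (x : ℝ) :
    ‖exp (I * x) - 1‖ ^ 2 = 2 - 2 * Real.cos x := by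
  have hcos : Real.cos x = 2 * Real.cos (x / 2) ^ 2 - 1 := by
    rw [← Real.cos_two_mul, mul_div_cancel₀ _ two_ne_zero]
  rw [norm_exp_I_mul_ofReal_sub_one, Real.norm_eq_abs, sq_abs, hcos]
  linear_combination 4 * Real.sin_sq_add_cos_sq (x / 2)

theorem integral_cos_mul_symm (k r : ℝ) :
    ∫ t in -r..r, Real.cos (k * t) = 2 * r * sinc (k * r) := by
  rcases eq_or_ne k 0 with rfl | hk
  · simp [sinc]
    ring
  rw [intervalIntegral.integral_comp_mul_left (fun t => Real.cos t) hk, integral_cos, mul_neg,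
    Real.sin_neg, smul_eq_mul, sinc]
  split_ifs with hkr
  · simp [(mul_eq_zero.1 hkr).resolve_left hk]
  · have hr : r ≠ 0 := right_ne_zero_of_mul hkr
    field_simp
    ring

theorem integral_norm_exp_I_mul_sub_one_sq (k r : ℝ) :
    ∫ t in -r..r, ‖exp (I * k * t) - 1‖ ^ 2 = 4 * r * (1 - sinc (k * r)) := by
  have hpt (t : ℝ) : ‖exp (I * k * t) - 1‖ ^ 2 = 2 - 2 * Real.cos (k * t) := by
    rw [mul_assoc, ← ofReal_mul, norm_exp_I_mul_ofReal_sub_one_sq]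
  simp only [hpt]
  rw [intervalIntegral.integral_sub intervalIntegrable_const
      (Continuous.intervalIntegrable (by fun_prop) _ _),
    intervalIntegral.integral_const_mul, intervalIntegral.integral_const, integral_cos_mul_symm]
  simp only [sub_neg_eq_add, smul_eq_mul]
  ring

noncomputable def trigPoly (K : Finset ℤ) (c : ℤ → ℂ) (θ : ℝ) : ℂ :=
  ∑ k ∈ K, c k * exp (I * k * θ)

theorem continuous_trigPoly (K : Finset ℤ) (c : ℤ → ℂ) : Continuous (trigPoly K c) := by
  unfold trigPoly
  fun_prop

theorem trigPoly_two_pi_mul_div_add (K : Finset ℤ) (c : ℤ → ℂ) (N j : ℕ) (t : ℝ) :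
    trigPoly K c (2 * Real.pi * j / N + t) =
      ∑ k ∈ K, c k * exp (I * k * t) * exp (2 * Real.pi * I / N) ^ ((j : ℤ) * k) := by
  refine sum_congr rfl fun k _ => ?_
  rw [← exp_int_mul, mul_assoc (c k), ← exp_add]
  congr 2
  push_cast
  ring

theorem trigPoly_two_pi_mul_div (K : Finset ℤ) (c : ℤ → ℂ) (N j : ℕ) :
    trigPoly K c (2 * Real.pi * j / N) =
      ∑ k ∈ K, c k * exp (2 * Real.pi * I / N) ^ ((j : ℤ) * k) := by
  simpa using trigPoly_two_pi_mul_div_add K c N j 0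

theorem sum_integral_norm_trigPoly_sub_sq (N : ℕ) (a : ℤ) (c : ℤ → ℂ) (r : ℝ) :
    ∑ j : Fin N, ∫ θ in (2 * Real.pi * (j : ℕ) / N - r)..(2 * Real.pi * (j : ℕ) / N + r),
        ‖trigPoly (Ico a (a + N)) c θ -
          trigPoly (Ico a (a + N)) c (2 * Real.pi * (j : ℕ) / N)‖ ^ 2 =
      N * ∑ k ∈ Ico a (a + N), ‖c k‖ ^ 2 * (4 * r * (1 - sinc (k * r))) := by
  rcases eq_or_ne N 0 with rfl | hN
  · simp
  have hζ := isPrimitiveRoot_exp N hN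
  set P := trigPoly (Ico a (a + N)) c with hP
  have hdiff (j : ℕ) (t : ℝ) : P (2 * Real.pi * j / N + t) - P (2 * Real.pi * j / N) =
      ∑ k ∈ Ico a (a + N),
        c k * (exp (I * k * t) - 1) * exp (2 * Real.pi * I / N) ^ ((j : ℤ) * k) := by
    rw [hP, trigPoly_two_pi_mul_div, trigPoly_two_pi_mul_div_add, ← sum_sub_distrib]
    exact sum_congr rfl fun k _ => by ring
  have hcont (j : Fin N) : Continuous fun t : ℝ =>
      ‖P (2 * Real.pi * (j : ℕ) / N + t) - P (2 * Real.pi * (j : ℕ) / N)‖ ^ 2 := by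
    have := continuous_trigPoly (Ico a (a + N)) c
    fun_prop
  calc ∑ j : Fin N, ∫ θ in (2 * Real.pi * (j : ℕ) / N - r)..(2 * Real.pi * (j : ℕ) / N + r),
        ‖P θ - P (2 * Real.pi * (j : ℕ) / N)‖ ^ 2
      = ∫ t in -r..r, ∑ j : Fin N,
          ‖P (2 * Real.pi * (j : ℕ) / N + t) - P (2 * Real.pi * (j : ℕ) / N)‖ ^ 2 := by
        rw [intervalIntegral.integral_finsetSum fun j _ => (hcont j).intervalIntegrable _ _]
        refine sum_congr rfl fun j _ => ?_
        rw [sub_eq_add_neg, ← intervalIntegral.integral_comp_add_left]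
    _ = ∫ t in -r..r, (N : ℝ) * ∑ k ∈ Ico a (a + N), ‖c k‖ ^ 2 * ‖exp (I * k * t) - 1‖ ^ 2 := by
        simp only [hdiff, hζ.sum_norm_sum_Ico_mul_zpow_sq, norm_mul, mul_pow]
    _ = N * ∑ k ∈ Ico a (a + N), ‖c k‖ ^ 2 * (4 * r * (1 - sinc (k * r))) := by
        rw [intervalIntegral.integral_const_mul, intervalIntegral.integral_finsetSum
          fun k _ => Continuous.intervalIntegrable (by fun_prop) _ _]
        simp only [intervalIntegral.integral_const_mul, ← ofReal_intCast,
          integral_norm_exp_I_mul_sub_one_sq]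

/-- Exact `L²` distance between the trigonometric interpolation
`S̃(θ) = ∑_{|k|≤n} c_k e^{ikθ}` and the piecewise constant interpolation of a
lattice function `S` on the `N`-th roots of unity (`N = 2n+1`):
`‖S̃ - Σ‖²_{L²} = 2 ∑_{|k|≤n} |c_k|² (1 - sinc(kπ/N))`. -/
theorem trig_vs_piecewise_constant (n N : ℕ) (hN : N = 2 * n + 1)
    (S : Fin N → ℂ) (c : ℤ → ℂ)
    (hc : ∀ k : ℤ, c k = (1 / (N : ℂ)) *
      ∑ j : Fin N, S j * Complex.exp (-(2 * Real.pi * Complex.I * (j : ℕ) * k / N))) :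
    (1 / (2 * Real.pi)) *
      ∑ j : Fin N,
        (∫ θ in (2 * Real.pi * (j : ℕ) / N - Real.pi / N)..(2 * Real.pi * (j : ℕ) / N + Real.pi / N),
          (‖(∑ k ∈ Finset.Icc (-(n : ℤ)) (n : ℤ),
            c k * Complex.exp (Complex.I * k * θ)) - S j‖) ^ 2) =
      2 * ∑ k ∈ Finset.Icc (-(n : ℤ)) (n : ℤ),
        (‖c k‖) ^ 2 * (1 - sinc ((k : ℝ) * Real.pi / N)) := by
  have hN0 : N ≠ 0 := by omega
  have hζ := isPrimitiveRoot_exp N hN0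
  have hK : Icc (-(n : ℤ)) n = Ico (-(n : ℤ)) (-n + N) := by
    rw [hN, ← Ico_add_one_right_eq_Icc]
    congr 1
    push_cast
    ring
  have hexp (i : ℕ) (k : ℤ) :
      exp (-(2 * Real.pi * I * i * k / N)) = exp (2 * Real.pi * I / N) ^ (-(i * k)) := by
    rw [← exp_int_mul]
    push_cast
    ring_nf
  have hS (j : Fin N) : S j = trigPoly (Ico (-(n : ℤ)) (-n + N)) c (2 * Real.pi * (j : ℕ) / N) := by
    rw [trigPoly_two_pi_mul_div, ← hζ.sum_Ico_dft_mul_zpow (-n) S j]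
    refine sum_congr rfl fun k _ => ?_
    rw [hc k, one_div]
    simp only [hexp]
  simp only [hS]
  rw [hK]
  -- the integrand is now `‖trigPoly _ c θ - trigPoly _ c θⱼ‖ ^ 2` up to unfolding `trigPoly`
  refine (congrArg _ (sum_integral_norm_trigPoly_sub_sq N (-n) c (Real.pi / N))).trans ?_
  rw [mul_sum, mul_sum, mul_sum]
  refine sum_congr rfl fun k _ => ?_
  rw [mul_div_assoc]
  field_simp
  ring
end

section
/- The identity ∑_{j∈ℤ} sinc²(x + jπ) = 1 holds for all real x, where sinc(x) = sin(x)/x and sinc(0) = 1. -/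
/-!
Herglotz's trick. Put `F x = ∑ⱼ sinc² (x + jπ)`: it is `π`-periodic, continuous and `F 0 = 1`.
Since `sinc (2y) = cos y · sinc y`, splitting the sum over even and odd `j` gives
`F x = cos² (x/2) F (x/2) + sin² (x/2) F ((x + π)/2)`. At a maximum point `x ∈ [0, π)` of `F`
this convex combination forces `F (x/2) = F x`, hence `F (x/2ⁿ) = F x` for all `n`, and by
continuity the maximum equals `F 0`. Applied to `-F` the same holds for the minimum, so `F ≡ 1`.
-/

open Set Filter Topology
open Real hiding sinc

theorem HasSum.int_even_add_odd {M : Type*} [AddCommMonoid M] [TopologicalSpace M]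
    [ContinuousAdd M] {f : ℤ → M} {a b : M} (he : HasSum (fun k ↦ f (2 * k)) a)
    (ho : HasSum (fun k ↦ f (2 * k + 1)) b) : HasSum f (a + b) := by
  have hmul := mul_right_injective₀ (two_ne_zero' ℤ)
  replace ho := ((add_left_injective 1).comp hmul).hasSum_range_iff.2 ho
  refine (hmul.hasSum_range_iff.2 he).add_isCompl ?_ ho
  simpa [Function.comp_def] using Int.isCompl_even_odd

theorem div_two_pow_mem_Ico {a x : ℝ} (hx : x ∈ Ico 0 a) (n : ℕ) : x / 2 ^ n ∈ Ico 0 a :=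
  ⟨by have := hx.1; positivity, (div_le_self hx.1 (one_le_pow₀ one_le_two)).trans_lt hx.2⟩

def HerglotzEquation (F : ℝ → ℝ) : Prop :=
  ∀ x ∈ Ico 0 π, F x = cos (x / 2) ^ 2 * F (x / 2) + sin (x / 2) ^ 2 * F ((x + π) / 2)

namespace HerglotzEquation

variable {F : ℝ → ℝ}

theorem neg (hF : HerglotzEquation F) : HerglotzEquation fun x ↦ -F x := fun x hx ↦ by
  simp only [hF x hx]; ring

theorem apply_half_eq_of_isMaxOn (hF : HerglotzEquation F) {x : ℝ} (hx : x ∈ Ico 0 π)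
    (hmax : IsMaxOn F (Icc 0 π) x) : F (x / 2) = F x := by
  have hcos : 0 < cos (x / 2) ^ 2 :=
    pow_pos (cos_pos_of_mem_Ioo ⟨by linarith [hx.1, pi_pos], by linarith [hx.2]⟩) 2
  have hhalf : F (x / 2) ≤ F x := hmax ⟨by linarith [hx.1], by linarith [hx.2, pi_pos]⟩
  have hshift : F ((x + π) / 2) ≤ F x := hmax ⟨by linarith [hx.1, pi_pos], by linarith [hx.2]⟩
  refine le_antisymm hhalf (le_of_mul_le_mul_left ?_ hcos)
  have hweighted := mul_le_mul_of_nonneg_left hshift (sq_nonneg (sin (x / 2)))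
  have heq := hF x hx
  rw [sin_sq] at hweighted heq
  linarith

theorem apply_div_two_pow_eq_of_isMaxOn (hF : HerglotzEquation F) {x : ℝ} (hx : x ∈ Ico 0 π)
    (hmax : IsMaxOn F (Icc 0 π) x) (n : ℕ) : F (x / 2 ^ n) = F x := by
  induction n with
  | zero => simp
  | succ n ih =>
    have hmax' : IsMaxOn F (Icc 0 π) (x / 2 ^ n) :=
      isMaxOn_iff.2 fun y hy ↦ (isMaxOn_iff.1 hmax y hy).trans_eq ih.symm
    rw [pow_succ, ← div_div, hF.apply_half_eq_of_isMaxOn (div_two_pow_mem_Ico hx n) hmax', ih]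

theorem apply_zero_eq_of_isMaxOn (hF : HerglotzEquation F)
    (hcont : ContinuousWithinAt F (Icc 0 π) 0) {x : ℝ} (hx : x ∈ Ico 0 π)
    (hmax : IsMaxOn F (Icc 0 π) x) : F 0 = F x := by
  have hlim : Tendsto (fun n : ℕ ↦ x / 2 ^ n) atTop (𝓝[Icc 0 π] 0) := by
    refine tendsto_nhdsWithin_iff.2 ⟨?_, Eventually.of_forall fun n ↦
      Ico_subset_Icc_self (div_two_pow_mem_Ico hx n)⟩
    simpa [div_eq_mul_inv] using (tendsto_pow_atTop_nhds_zero_of_lt_one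
      (by norm_num : (0 : ℝ) ≤ 2⁻¹) (by norm_num)).const_mul x
  refine tendsto_nhds_unique (hcont.tendsto.comp hlim) ?_
  simp only [Function.comp_def, hF.apply_div_two_pow_eq_of_isMaxOn hx hmax]
  exact tendsto_const_nhds

theorem isMaxOn_zero (hF : HerglotzEquation F) (hcont : ContinuousOn F (Icc 0 π))
    (hper : F π = F 0) : IsMaxOn F (Icc 0 π) 0 := by
  obtain ⟨x, hx, hmax⟩ := isCompact_Icc.exists_isMaxOn (nonempty_Icc.2 pi_pos.le) hcont
  have hx0 : F x = F 0 := by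
    rcases eq_or_lt_of_le hx.2 with rfl | hlt
    · exact hper
    · exact (hF.apply_zero_eq_of_isMaxOn (hcont 0 (left_mem_Icc.2 pi_pos.le))
        ⟨hx.1, hlt⟩ hmax).symm
  exact isMaxOn_iff.2 fun y hy ↦ (isMaxOn_iff.1 hmax y hy).trans_eq hx0

theorem eqOn_const (hF : HerglotzEquation F) (hcont : ContinuousOn F (Icc 0 π))
    (hper : F π = F 0) : EqOn F (fun _ ↦ F 0) (Icc 0 π) := fun x hx ↦
  le_antisymm (hF.isMaxOn_zero hcont hper hx)
    (neg_le_neg_iff.1 (hF.neg.isMaxOn_zero hcont.neg (by rw [hper]) hx))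

end HerglotzEquation

theorem Real.mul_sinc (x : ℝ) : x * Real.sinc x = sin x := by
  rcases eq_or_ne x 0 with rfl | hx
  · simp
  · rw [Real.sinc_of_ne_zero hx, mul_div_cancel₀ _ hx]

theorem Real.sinc_two_mul (x : ℝ) : Real.sinc (2 * x) = cos x * Real.sinc x := by
  rcases eq_or_ne x 0 with rfl | hx
  · simp
  · rw [Real.sinc_of_ne_zero hx, Real.sinc_of_ne_zero (by positivity), sin_two_mul]
    field_simp

theorem Real.cos_sq_add_int_mul_pi (x : ℝ) (n : ℤ) : cos (x + n * π) ^ 2 = cos x ^ 2 := by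
  rw [cos_add_int_mul_pi, mul_pow, ← sq_abs ((-1 : ℝ) ^ n), abs_neg_one_zpow, one_pow, one_mul]

-- Odd denominators: unlike `1 / j ^ 2`, this majorant has no junk term `1 / 0` at `j = 0`.
theorem Real.sinc_sq_add_int_mul_pi_le {x : ℝ} (hx : x ∈ Icc 0 π) (j : ℤ) :
    Real.sinc (x + j * π) ^ 2 ≤ 4 / (2 * j + 1) ^ 2 := by
  set y := x + j * π
  have hj : |(2 * j + 1 : ℝ)| * π ≤ 2 * |y| + π := by
    have hx' : |π - 2 * x| ≤ π := abs_le.2 ⟨by linarith [hx.2], by linarith [hx.1]⟩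
    calc |(2 * j + 1 : ℝ)| * π = |2 * y + (π - 2 * x)| := by
          rw [← abs_of_pos pi_pos, ← abs_mul, abs_of_pos pi_pos]; congr 1; ring
      _ ≤ 2 * |y| + π := by
          refine (abs_add_le _ _).trans ?_
          rw [abs_mul, abs_two]; linarith
  have hsin : |y| * |Real.sinc y| ≤ 1 := by rw [← abs_mul, mul_sinc]; exact abs_sin_le_one y
  have hsinc := abs_sinc_le_one y
  have hprod : |(2 * j + 1 : ℝ)| * |Real.sinc y| ≤ 2 := by
    nlinarith [mul_le_mul_of_nonneg_right hj (abs_nonneg (Real.sinc y)), pi_gt_three]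
  have hodd : (2 * j + 1 : ℝ) ≠ 0 := by exact_mod_cast (by omega : 2 * j + 1 ≠ 0)
  rw [le_div_iff₀ (by positivity), ← sq_abs, ← sq_abs (2 * (j : ℝ) + 1), ← mul_pow, mul_comm]
  exact (pow_le_pow_left₀ (by positivity) hprod 2).trans (by norm_num)

theorem summable_four_div_two_mul_add_one_sq : Summable fun j : ℤ ↦ (4 : ℝ) / (2 * j + 1) ^ 2 := by
  have hinj : Function.Injective fun j : ℤ ↦ 2 * j + 1 :=
    (add_left_injective 1).comp (mul_right_injective₀ two_ne_zero)
  simpa [div_eq_mul_inv] using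
    ((summable_one_div_int_pow.2 one_lt_two).comp_injective hinj).mul_left 4

noncomputable def sincSqSum (x : ℝ) : ℝ := ∑' j : ℤ, Real.sinc (x + j * π) ^ 2

theorem summable_sinc_sq_add_int_mul_pi {x : ℝ} (hx : x ∈ Icc 0 π) :
    Summable fun j : ℤ ↦ Real.sinc (x + j * π) ^ 2 :=
  summable_four_div_two_mul_add_one_sq.of_nonneg_of_le (fun _ ↦ sq_nonneg _)
    (Real.sinc_sq_add_int_mul_pi_le hx)

theorem continuousOn_sincSqSum : ContinuousOn sincSqSum (Icc 0 π) :=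
  continuousOn_tsum (fun _ ↦ by fun_prop) summable_four_div_two_mul_add_one_sq
    fun j _ hx ↦ (Real.norm_of_nonneg (sq_nonneg _)).trans_le (Real.sinc_sq_add_int_mul_pi_le hx j)

theorem periodic_sincSqSum : Function.Periodic sincSqSum π := fun x ↦ by
  rw [sincSqSum, sincSqSum,
    ← (Equiv.addRight (1 : ℤ)).tsum_eq fun j : ℤ ↦ Real.sinc (x + j * π) ^ 2]
  refine tsum_congr fun j ↦ ?_
  simp only [Equiv.coe_addRight, Int.cast_add, Int.cast_one]
  ring_nf

theorem sincSqSum_zero : sincSqSum 0 = 1 := by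
  rw [sincSqSum, tsum_eq_single 0 fun j hj ↦ ?_]
  · simp
  · rw [zero_add, Real.sinc_of_ne_zero (by positivity), sin_int_mul_pi]
    simp

theorem herglotzEquation_sincSqSum : HerglotzEquation sincSqSum := fun x hx ↦ by
  have hs := summable_sinc_sq_add_int_mul_pi (Ico_subset_Icc_self hx)
  have h2 : Function.Injective fun k : ℤ ↦ 2 * k := mul_right_injective₀ two_ne_zero
  have hsplit := HasSum.int_even_add_odd (f := fun j : ℤ ↦ Real.sinc (x + j * π) ^ 2)
    (hs.comp_injective h2).hasSum (hs.comp_injective ((add_left_injective 1).comp h2)).hasSum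
  rw [sincSqSum, hsplit.tsum_eq, sincSqSum, sincSqSum, ← tsum_mul_left, ← tsum_mul_left]
  congr 1 <;> refine tsum_congr fun k ↦ ?_
  · have : x + ((2 * k : ℤ) : ℝ) * π = 2 * (x / 2 + k * π) := by push_cast; ring
    simp only [Function.comp_apply, this, Real.sinc_two_mul, mul_pow, cos_sq_add_int_mul_pi]
  · have : x + ((2 * k + 1 : ℤ) : ℝ) * π = 2 * ((x + π) / 2 + k * π) := by push_cast; ring
    have hcos : cos ((x + π) / 2) ^ 2 = sin (x / 2) ^ 2 := by
      rw [add_div, cos_add_pi_div_two, neg_sq]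
    simp only [Function.comp_apply, this, Real.sinc_two_mul, mul_pow, cos_sq_add_int_mul_pi, hcos]

/-- The identity `∑_{j∈ℤ} sinc²(x + jπ) = 1` holds for all real `x`. -/
theorem sinc_sq_sum (x : ℝ) : ∑' j : ℤ, (sinc (x + j * Real.pi)) ^ 2 = 1 := by
  obtain ⟨y, hy, hxy⟩ := periodic_sincSqSum.exists_mem_Ico₀ pi_pos x
  have hconst := herglotzEquation_sincSqSum.eqOn_const continuousOn_sincSqSum
    (by simpa using periodic_sincSqSum 0)
  calc ∑' j : ℤ, (sinc (x + j * Real.pi)) ^ 2 = sincSqSum y := hxy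
    _ = sincSqSum 0 := hconst (Ico_subset_Icc_self hy)
    _ = 1 := sincSqSum_zero
end
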